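/- Let R be a commutative ring and M an R-module. The kernel of the diagonal homomorphism δ_M : M → ∏_{m ∈ w-Max(R)} M_m, x ↦ ((x/1)_m), equals the GV-torsion submodule tor_GV(M) of M. -/

import Mathlib

/-!
A proper w-ideal contains no GV-ideal. Conversely, GV-ideals are finitely generated and closed
under products, so "contains a GV-ideal" is an Oka property of ideals: by Zorn, an ideal containing
no GV-ideal lies in an ideal maximal for this, which is prime and therefore a maximal w-ideal.
Since `x / 1 = 0` in `M_m` exactly when `ann(x) ⊄ m`, applying this to `ann(x)` gives the theorem.
-/

universe u v

section WDefs

variable (R : Type u) [CommRing R]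

/-- The canonical `R`-linear map `R → Hom_R(J, R)`, `r ↦ (j ↦ r * j)`. -/
def gvCanonicalMap (J : Ideal R) : R →ₗ[R] (J →ₗ[R] R) where
  toFun r := r • (J.subtype)
  map_add' x y := add_smul x y _
  map_smul' r x := by simp [mul_smul]

/-- A finitely generated ideal `J` of `R` is a GV-ideal (Glaz–Vasconcelos ideal)
if the canonical map `R → Hom_R(J, R)` is an isomorphism. -/
def IsGVIdeal (J : Ideal R) : Prop :=
  J.FG ∧ Function.Bijective (gvCanonicalMap R J)

/-- An ideal `I` of `R` is a w-ideal if whenever `J x ⊆ I` for some GV-ideal `J`,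
then `x ∈ I`. -/
def IsWIdeal (I : Ideal R) : Prop :=
  ∀ x : R, (∃ J : Ideal R, IsGVIdeal R J ∧ ∀ j ∈ J, j * x ∈ I) → x ∈ I

/-- `m` is a maximal w-ideal: maximal among the proper w-ideals of `R`. -/
def IsMaxWIdeal (m : Ideal R) : Prop :=
  IsWIdeal R m ∧ m ≠ ⊤ ∧ ∀ I : Ideal R, IsWIdeal R I → I ≠ ⊤ → m ≤ I → I = m

variable {M : Type v} [AddCommGroup M] [Module R M]

/-- `x` is a GV-torsion element if it is killed by some GV-ideal. -/
def IsGVTorsionElem (x : M) : Prop :=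
  ∃ J : Ideal R, IsGVIdeal R J ∧ ∀ j ∈ J, j • x = 0

variable (M)

/-- `M` is GV-torsion-free if it has no nonzero GV-torsion element. -/
def IsGVTorsionFree : Prop := ∀ x : M, IsGVTorsionElem R x → x = 0

/-- `M` is GV-torsion if all its elements are GV-torsion. -/
def IsGVTorsion : Prop := ∀ x : M, IsGVTorsionElem R x

/-- `M` is a w-module: GV-torsion-free and every map from a GV-ideal to `M`
extends to `R`. -/
def IsWModule : Prop :=
  IsGVTorsionFree R M ∧
    ∀ J : Ideal R, IsGVIdeal R J → ∀ f : J →ₗ[R] M,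
      ∃ g : R →ₗ[R] M, ∀ x : J, g (x : R) = f x

end WDefs

/-- The set of maximal w-ideals (each of which is prime). -/
def WMaxPrimes (R : Type u) [CommRing R] : Type u :=
  {m : Ideal R // IsMaxWIdeal R m ∧ m.IsPrime}

/-- The multiplicative complement of a maximal w-ideal. -/
def wMaxCompl {R : Type u} [CommRing R] (m : WMaxPrimes R) : Submonoid R :=
  @Ideal.primeCompl R _ m.1 m.2.2

/-- The diagonal homomorphism `δ_M : M → ∏_{m ∈ w-Max(R)} M_m`. -/
noncomputable def wDiagonal (R : Type u) [CommRing R] (M : Type u) [AddCommGroup M]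
    [Module R M] :
    M →ₗ[R] ((m : WMaxPrimes R) → LocalizedModule (wMaxCompl m) M) :=
  LinearMap.pi fun m => LocalizedModule.mkLinearMap (wMaxCompl m) M

namespace IsGVIdeal

variable {R : Type u} [CommRing R] {J J₁ J₂ : Ideal R}

lemma mk' (hfg : J.FG) (hinj : ∀ r r' : R, (∀ j ∈ J, r * j = r' * j) → r = r')
    (hsurj : ∀ f : J →ₗ[R] R, ∃ r : R, ∀ j : J, f j = r * j) : IsGVIdeal R J :=
  ⟨hfg, fun r r' h => hinj r r' fun j hj => LinearMap.congr_fun h ⟨j, hj⟩,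
    fun f => (hsurj f).imp fun _ hr => LinearMap.ext fun j => (hr j).symm⟩

lemma eq_of_forall_mul_eq (h : IsGVIdeal R J) {r r' : R} (hrr : ∀ j ∈ J, r * j = r' * j) :
    r = r' :=
  h.2.1 <| LinearMap.ext fun j => hrr j j.2

lemma exists_eq_mul (h : IsGVIdeal R J) (f : J →ₗ[R] R) : ∃ r : R, ∀ j : J, f j = r * j :=
  (h.2.2 f).imp fun _ hr j => (LinearMap.congr_fun hr j).symm

lemma mul (h₁ : IsGVIdeal R J₁) (h₂ : IsGVIdeal R J₂) : IsGVIdeal R (J₁ * J₂) := by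
  refine mk' (h₁.1.mul h₂.1) (fun r r' hrr => ?_) fun f => ?_
  · refine h₂.eq_of_forall_mul_eq fun j₂ hj₂ => h₁.eq_of_forall_mul_eq fun j₁ hj₁ => ?_
    simpa only [mul_assoc, mul_comm j₂] using hrr _ (Submodule.mul_mem_mul hj₁ hj₂)
  · -- `F j₂ = f (· * j₂)` acts on `J₁` as some element of `R`, which depends linearly on `j₂`
    -- (by bijectivity for `J₁`), hence as `r * j₂` (by bijectivity for `J₂`).
    let F : J₂ →ₗ[R] J₁ →ₗ[R] R := LinearMap.mk₂ R
      (fun j₂ j₁ => f ⟨j₁ * j₂, Submodule.mul_mem_mul j₁.2 j₂.2⟩)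
      (fun a b c => by rw [← map_add]; congr 1; ext; simp [mul_add])
      (fun r a b => by rw [← map_smul]; congr 1; ext; simp [mul_left_comm])
      (fun a b c => by rw [← map_add]; congr 1; ext; simp [add_mul])
      (fun r a b => by rw [← map_smul]; congr 1; ext; simp [mul_assoc])
    obtain ⟨r, hr⟩ := h₂.exists_eq_mul ((LinearEquiv.ofBijective _ h₁.2).symm ∘ₗ F)
    have hF (j₁ : J₁) (j₂ : J₂) :
        f ⟨j₁ * j₂, Submodule.mul_mem_mul j₁.2 j₂.2⟩ = r * j₂ * j₁ := by
      have := congrArg (LinearEquiv.ofBijective _ h₁.2) (hr j₂)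
      simp only [LinearMap.coe_comp, LinearEquiv.coe_coe, Function.comp_apply,
        LinearEquiv.apply_symm_apply] at this
      exact LinearMap.congr_fun this j₁
    refine ⟨r, fun ⟨x, hx⟩ => ?_⟩
    induction hx using Submodule.mul_induction_on' with
    | mem_mul_mem a ha b hb => simpa [mul_comm a, mul_assoc] using hF ⟨a, ha⟩ ⟨b, hb⟩
    | add a ha b hb iha ihb =>
      rw [show (⟨a + b, add_mem ha hb⟩ : ↥(J₁ * J₂)) = ⟨a, ha⟩ + ⟨b, hb⟩ from rfl, map_add,
        iha, ihb]
      exact (mul_add r a b).symm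

end IsGVIdeal

lemma isGVIdeal_top {R : Type u} [CommRing R] : IsGVIdeal R (⊤ : Ideal R) := by
  refine IsGVIdeal.mk' ⟨{1}, by simp⟩ (fun r r' h => by simpa using h 1 trivial)
    fun f => ⟨f ⟨1, trivial⟩, fun j => ?_⟩
  rw [mul_comm, ← smul_eq_mul, ← f.map_smul]
  exact congrArg f (Subtype.ext (mul_one _).symm)

section ContainsGVIdeal

variable {R : Type u} [CommRing R]

variable (R) in
def ContainsGVIdeal (I : Ideal R) : Prop :=
  ∃ J : Ideal R, IsGVIdeal R J ∧ J ≤ I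

lemma isOka_containsGVIdeal : Ideal.IsOka (ContainsGVIdeal R) where
  top := ⟨⊤, isGVIdeal_top, le_rfl⟩
  oka := by
    rintro I a ⟨J₁, hJ₁, hle₁⟩ ⟨J₂, hJ₂, hle₂⟩
    refine ⟨J₁ * J₂, hJ₁.mul hJ₂, ?_⟩
    calc J₁ * J₂ ≤ (I ⊔ Ideal.span {a}) * I.colon (Ideal.span {a}) := Ideal.mul_mono hle₁ hle₂
      _ = I * I.colon (Ideal.span {a}) ⊔ Ideal.span {a} * I.colon (Ideal.span {a}) :=
        Submodule.sup_mul ..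
      _ ≤ I := sup_le Ideal.mul_le_left <| Ideal.span_singleton_mul_le_iff.2 fun z hz => by
        simpa only [mul_comm a] using Ideal.mem_colon_span_singleton.1 hz

lemma exists_le_maximal_not_containsGVIdeal {I : Ideal R} (hI : ¬ContainsGVIdeal R I) :
    ∃ P, I ≤ P ∧ Maximal (¬ContainsGVIdeal R ·) P := by
  refine zorn_le_nonempty₀ _ (fun c hc hchain y hy => ⟨sSup c, ?_, fun _ => le_sSup⟩) I hI
  rintro ⟨J, hJ, hJc⟩
  obtain ⟨P, hPc, hJP⟩ :=
    (CompleteLattice.isCompactElement_iff_le_of_directed_sSup_le (α := Ideal R) J).1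
      ((Submodule.fg_iff_compact J).1 hJ.1) c ⟨y, hy⟩ hchain.directedOn hJc
  exact hc hPc ⟨J, hJ, hJP⟩

lemma IsWIdeal.eq_top_of_isGVIdeal_le {I J : Ideal R} (hI : IsWIdeal R I) (hJ : IsGVIdeal R J)
    (hJI : J ≤ I) : I = ⊤ :=
  (Ideal.eq_top_iff_one I).2 <| hI 1 ⟨J, hJ, fun j hj => by simpa using hJI hj⟩

lemma isMaxWIdeal_of_maximal_not_containsGVIdeal {P : Ideal R}
    (hP : Maximal (¬ContainsGVIdeal R ·) P) : IsMaxWIdeal R P := by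
  have hprime := isOka_containsGVIdeal.isPrime_of_maximal_not hP
  refine ⟨fun x ⟨J, hJ, hJx⟩ => ?_, hprime.ne_top, fun I hI hne hPI => ?_⟩
  · by_contra hx
    exact hP.prop ⟨J, hJ, fun j hj => (hprime.mem_or_mem (hJx j hj)).resolve_right hx⟩
  · exact hP.eq_of_ge (fun ⟨J, hJ, hJI⟩ => hne (hI.eq_top_of_isGVIdeal_le hJ hJI)) hPI

lemma exists_wMaxPrimes_le_iff (I : Ideal R) :
    (∃ m : WMaxPrimes R, I ≤ m.1) ↔ ¬ContainsGVIdeal R I := by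
  constructor
  · rintro ⟨m, hIm⟩ ⟨J, hJ, hJI⟩
    exact m.2.1.2.1 (m.2.1.1.eq_top_of_isGVIdeal_le hJ (hJI.trans hIm))
  · intro hI
    obtain ⟨P, hIP, hP⟩ := exists_le_maximal_not_containsGVIdeal hI
    exact ⟨⟨P, isMaxWIdeal_of_maximal_not_containsGVIdeal hP,
      isOka_containsGVIdeal.isPrime_of_maximal_not hP⟩, hIP⟩

variable {M : Type v} [AddCommGroup M] [Module R M]

lemma isGVTorsionElem_iff_containsGVIdeal_annihilator (x : M) :
    IsGVTorsionElem R x ↔ ContainsGVIdeal R (R ∙ x).annihilator := by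
  simp only [IsGVTorsionElem, ContainsGVIdeal, SetLike.le_def,
    Submodule.mem_annihilator_span_singleton]

end ContainsGVIdeal

lemma wDiagonal_eq_zero_iff {R : Type u} [CommRing R] {M : Type u} [AddCommGroup M] [Module R M]
    (x : M) : wDiagonal R M x = 0 ↔ ∀ m : WMaxPrimes R, ¬(R ∙ x).annihilator ≤ m.1 := by
  simp only [funext_iff, SetLike.not_le_iff_exists, Submodule.mem_annihilator_span_singleton]
  exact forall_congr' fun m => LocalizedModule.mem_ker_mkLinearMap_iff.trans
    ⟨fun ⟨r, hr, hrx⟩ => ⟨r, hrx, hr⟩, fun ⟨r, hrx, hr⟩ => ⟨r, hr, hrx⟩⟩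

/-- The kernel of the diagonal map `δ_M : M → ∏_{m ∈ w-Max(R)} M_m`
is exactly the GV-torsion submodule of `M`. -/
theorem ker_wDiagonal_eq_gvTorsion (R : Type u) [CommRing R] (M : Type u) [AddCommGroup M]
    [Module R M] :
    ∀ x : M, wDiagonal R M x = 0 ↔ IsGVTorsionElem R x := by
  intro x
  rw [wDiagonal_eq_zero_iff, isGVTorsionElem_iff_containsGVIdeal_annihilator,
    ← not_exists, exists_wMaxPrimes_le_iff, not_not]
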